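/- Let m ≥ 1 and 1 ≤ j ≤ m. The vector w ∈ ℝᵐ with components w_l = sin(jπ·l/(m+1)), l = 1,…,m, satisfies T_m w = λ_{j,m} w, where λ_{j,m} := (1 − (2/3)·sin²(jπ/(2(m+1)))) / (16·(m+1)³·sin⁴(jπ/(2(m+1)))); that is, λ_{j,m} = σ_{j,m}² is an eigenvalue of T_m with eigenvector (sin(jπ·l/(m+1)))_{l=1}^m. -/

import Mathlib

open Real

/-- The kernel `κ₀(x,y) = min(x(1−y), y(1−x))`. -/
noncomputable def kappa0 (x y : ℝ) : ℝ := min (x * (1 - y)) (y * (1 - x))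

/-!
With mesh `h = 1/(m+1)` and nodes `xᵢ = i h`, the second difference
`κ₀(x_{i-1}, y) - 2 κ₀(xᵢ, y) + κ₀(x_{i+1}, y)` is minus the hat function of half-width `h`
centred at `xᵢ`. Second differences of `T` in both indices therefore produce the Gram matrix of
the hats, the tridiagonal mass matrix `h³/6 · (1, 4, 1)`. The vector `wₗ = sin(l θ)`,
`θ = jπ/(m+1)`, vanishes at `l = 0, m+1` and satisfies `Δw = -μ w` with `μ = 4 sin²(θ/2)`, so
summation by parts moves the differences onto `w`. With `λ = h³ (6 - μ) / (6 μ²)` this shows that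
`(T w)ᵢ - λ wᵢ`, read by the same formula for `0 ≤ i ≤ m+1`, has vanishing second differences and
vanishes at both ends (as `κ₀(0, ·) = κ₀(1, ·) = 0`), hence is zero.
-/

open Finset intervalIntegral

-- Centred at `i + 1`, so that the indices stay natural numbers.
def secondDiff (u : ℕ → ℝ) (i : ℕ) : ℝ := u i - 2 * u (i + 1) + u (i + 2)

theorem secondDiff_mul_const (u : ℕ → ℝ) (c : ℝ) (i : ℕ) :
    secondDiff (fun k => u k * c) i = secondDiff u i * c := by
  simp only [secondDiff]; ring

theorem secondDiff_const_mul (c : ℝ) (u : ℕ → ℝ) (i : ℕ) :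
    secondDiff (fun k => c * u k) i = c * secondDiff u i := by
  simp only [secondDiff]; ring

theorem secondDiff_sum {ι : Type*} (s : Finset ι) (F : ι → ℕ → ℝ) (i : ℕ) :
    secondDiff (fun k => ∑ l ∈ s, F l k) i = ∑ l ∈ s, secondDiff (F l) i := by
  simp only [secondDiff, sum_add_distrib, sum_sub_distrib, mul_sum]

theorem secondDiff_intervalIntegral {a b : ℝ} (F : ℕ → ℝ → ℝ)
    (hF : ∀ k, IntervalIntegrable (F k) MeasureTheory.volume a b) (i : ℕ) :
    secondDiff (fun k => ∫ y in a..b, F k y) i = ∫ y in a..b, secondDiff (fun k => F k y) i := by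
  simp only [secondDiff]
  rw [integral_add ((hF _).sub ((hF _).const_mul 2)) (hF _),
    integral_sub (hF _) ((hF _).const_mul 2), integral_const_mul]

theorem sum_mul_secondDiff_comm (u v : ℕ → ℝ) {m : ℕ} (hu₀ : u 0 = 0) (hu : u (m + 1) = 0)
    (hv₀ : v 0 = 0) (hv : v (m + 1) = 0) :
    ∑ l ∈ range m, u (l + 1) * secondDiff v l = ∑ l ∈ range m, secondDiff u l * v (l + 1) := by
  rw [← sub_eq_zero, ← sum_sub_distrib]
  have := sum_range_sub (fun l => u l * v (l + 1) - u (l + 1) * v l) m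
  simp only [hu₀, hu, hv₀, hv, mul_zero, zero_mul, sub_zero] at this
  rw [← this]
  refine sum_congr rfl fun l _ => ?_
  simp only [secondDiff]
  ring

theorem eq_zero_of_secondDiff_eq_zero {Z : ℕ → ℝ} {m : ℕ} (h₀ : Z 0 = 0) (hm : Z (m + 1) = 0)
    (hZ : ∀ i < m, secondDiff Z i = 0) {i : ℕ} (hi : i ≤ m + 1) : Z i = 0 := by
  have hlin : ∀ k ≤ m + 1, Z k = k * Z 1 := by
    intro k hk
    induction k using Nat.strong_induction_on with
    | _ k ih =>
      match k with
      | 0 => simp [h₀]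
      | 1 => simp
      | k + 2 =>
        have := hZ k (by omega)
        rw [secondDiff, ih k (by omega) (by omega), ih (k + 1) (by omega) (by omega)] at this
        push_cast at this ⊢
        linarith
  have h₁ : Z 1 = 0 := by
    have := hlin (m + 1) le_rfl
    rw [hm, Nat.cast_add_one] at this
    exact (mul_eq_zero.mp this.symm).resolve_left (by positivity)
  rw [hlin i hi, h₁, mul_zero]

theorem secondDiff_sin (θ : ℝ) (l : ℕ) :
    secondDiff (fun k => sin (k * θ)) l = -(4 * sin (θ / 2) ^ 2) * sin ((l + 1 : ℕ) * θ) := by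
  have h₁ : (l : ℝ) * θ = (l + 1 : ℕ) * θ - 2 * (θ / 2) := by push_cast; ring
  have h₂ : ((l + 2 : ℕ) : ℝ) * θ = (l + 1 : ℕ) * θ + 2 * (θ / 2) := by push_cast; ring
  simp only [secondDiff, h₁, h₂, sin_sub, sin_add, cos_two_mul, cos_sq']
  ring

noncomputable def hat (h c y : ℝ) : ℝ := max 0 (h - |y - c|)

theorem continuous_hat (h c : ℝ) : Continuous (hat h c) := by unfold hat; fun_prop

theorem hat_eq_zero_of_le_sub {h c y : ℝ} (hy : y ≤ c - h) : hat h c y = 0 :=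
  max_eq_left (by linarith [neg_le_abs (y - c)])

theorem hat_eq_zero_of_add_le {h c y : ℝ} (hy : c + h ≤ y) : hat h c y = 0 :=
  max_eq_left (by linarith [le_abs_self (y - c)])

theorem hat_eq_of_mem_Icc_left {h c y : ℝ} (hy : y ∈ Set.Icc (c - h) c) :
    hat h c y = y - (c - h) := by
  rw [hat, abs_of_nonpos (by linarith [hy.2]), max_eq_right (by linarith [hy.1])]; ring

theorem hat_eq_of_mem_Icc_right {h c y : ℝ} (hy : y ∈ Set.Icc c (c + h)) :
    hat h c y = c + h - y := by
  rw [hat, abs_of_nonneg (by linarith [hy.1]), max_eq_right (by linarith [hy.2])]; ring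

theorem hat_mul_hat_eq_zero {h c d : ℝ} (hcd : c + 2 * h ≤ d) (y : ℝ) :
    hat h c y * hat h d y = 0 := by
  rcases le_total y (c + h) with hy | hy
  · rw [hat_eq_zero_of_le_sub (c := d) (by linarith), mul_zero]
  · rw [hat_eq_zero_of_add_le hy, zero_mul]

theorem integral_eq_integral_of_eq_zero_outside {f : ℝ → ℝ} (hf : Continuous f) {a a' b' b : ℝ}
    (ha : a ≤ a') (hb : b' ≤ b) (h₁ : ∀ y ∈ Set.Icc a a', f y = 0)
    (h₂ : ∀ y ∈ Set.Icc b' b, f y = 0) : ∫ y in a..b, f y = ∫ y in a'..b', f y := by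
  have hi : ∀ p q : ℝ, IntervalIntegrable f MeasureTheory.volume p q :=
    fun p q => hf.intervalIntegrable p q
  rw [← integral_add_adjacent_intervals (hi a a') (hi a' b),
    ← integral_add_adjacent_intervals (hi a' b') (hi b' b),
    integral_congr (g := 0) (by rwa [Set.uIcc_of_le ha]),
    integral_congr (a := b') (g := 0) (by rwa [Set.uIcc_of_le hb])]
  simp

theorem integral_hat_mul_self {h c a b : ℝ} (hh : 0 ≤ h) (ha : a ≤ c - h) (hb : c + h ≤ b) :
    ∫ y in a..b, hat h c y * hat h c y = 2 * h ^ 3 / 3 := by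
  have hc : Continuous fun y => hat h c y * hat h c y :=
    (continuous_hat h c).mul (continuous_hat h c)
  rw [integral_eq_integral_of_eq_zero_outside hc ha hb
      (fun y hy => by rw [hat_eq_zero_of_le_sub hy.2, zero_mul])
      (fun y hy => by rw [hat_eq_zero_of_add_le hy.1, zero_mul]),
    ← integral_add_adjacent_intervals (b := c) (hc.intervalIntegrable _ _)
      (hc.intervalIntegrable _ _),
    integral_congr (g := fun y => (y - (c - h)) ^ 2) (fun y hy => by
      rw [Set.uIcc_of_le (by linarith)] at hy
      simp only [hat_eq_of_mem_Icc_left hy, sq]),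
    integral_congr (a := c) (g := fun y => (c + h - y) ^ 2) (fun y hy => by
      rw [Set.uIcc_of_le (by linarith)] at hy
      simp only [hat_eq_of_mem_Icc_right hy, sq]),
    integral_comp_sub_right (fun y => y ^ 2), integral_comp_sub_left (fun y => y ^ 2)]
  simp only [integral_pow]
  ring

theorem integral_hat_mul_hat_add {h c a b : ℝ} (hh : 0 ≤ h) (ha : a ≤ c) (hb : c + h ≤ b) :
    ∫ y in a..b, hat h c y * hat h (c + h) y = h ^ 3 / 6 := by
  have hc : Continuous fun y => hat h c y * hat h (c + h) y :=
    (continuous_hat h c).mul (continuous_hat h (c + h))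
  rw [integral_eq_integral_of_eq_zero_outside hc ha (b' := c + h) hb
      (fun y hy => by rw [hat_eq_zero_of_le_sub (c := c + h) (by linarith [hy.2]), mul_zero])
      (fun y hy => by rw [hat_eq_zero_of_add_le hy.1, zero_mul]),
    integral_congr (g := fun y => h * (y - c) - (y - c) ^ 2) (fun y hy => by
      rw [Set.uIcc_of_le (by linarith)] at hy
      simp only [hat_eq_of_mem_Icc_right hy,
        hat_eq_of_mem_Icc_left (h := h) (c := c + h) ⟨by linarith [hy.1], hy.2⟩]
      ring),
    integral_comp_sub_right (fun y => h * y - y ^ 2),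
    integral_sub (f := fun y => h * y) (g := fun y => y ^ 2)
      ((continuous_const.mul continuous_id).intervalIntegrable _ _)
      ((continuous_pow 2).intervalIntegrable _ _)]
  rw [intervalIntegral.integral_const_mul, integral_id, integral_pow]
  ring

theorem min_sub_two_mul_min_add_min (x y h : ℝ) (hh : 0 ≤ h) :
    min (x - h) y - 2 * min x y + min (x + h) y = -hat h x y := by
  rw [hat]
  rcases le_total x y with hxy | hxy
  · rw [abs_of_nonneg (by linarith)]
    rcases le_total (x + h) y with h₁ | h₁
    · rw [min_eq_left (by linarith), min_eq_left hxy, min_eq_left h₁, max_eq_left (by linarith)]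
      ring
    · rw [min_eq_left (by linarith), min_eq_left hxy, min_eq_right h₁, max_eq_right (by linarith)]
      ring
  · rw [abs_of_nonpos (by linarith)]
    rcases le_total (x - h) y with h₁ | h₁
    · rw [min_eq_left h₁, min_eq_right hxy, min_eq_right (by linarith), max_eq_right (by linarith)]
      ring
    · rw [min_eq_right h₁, min_eq_right hxy, min_eq_right (by linarith), max_eq_left (by linarith)]
      ring

theorem kappa0_eq_min_sub_mul (x y : ℝ) : kappa0 x y = min x y - x * y := by
  rw [kappa0]
  rcases le_total x y with h | h
  · rw [min_eq_left (by nlinarith), min_eq_left h]; ring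
  · rw [min_eq_right (by nlinarith), min_eq_right h]; ring

theorem continuous_kappa0 (x : ℝ) : Continuous (kappa0 x) := by
  unfold kappa0; fun_prop

theorem kappa0_eq_zero {x y : ℝ} (hx : x = 0 ∨ x = 1) (hy : y ∈ Set.Icc (0 : ℝ) 1) :
    kappa0 x y = 0 := by
  rcases hx with rfl | rfl <;> rw [kappa0_eq_min_sub_mul]
  · rw [min_eq_left hy.1]; ring
  · rw [min_eq_right hy.2]; ring

theorem secondDiff_kappa0 {h : ℝ} (hh : 0 ≤ h) (y : ℝ) (i : ℕ) :
    secondDiff (fun k => kappa0 (k * h) y) i = -hat h ((i + 1 : ℕ) * h) y := by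
  have := min_sub_two_mul_min_add_min ((i + 1 : ℕ) * h) y h hh
  simp only [secondDiff, kappa0_eq_min_sub_mul]
  push_cast at this ⊢
  rw [← this]
  ring_nf

section Gram

variable (h : ℝ)

noncomputable def kernelGram (i l : ℕ) : ℝ :=
  ∫ y in (0 : ℝ)..1, kappa0 (i * h) y * kappa0 (l * h) y

noncomputable def hatKernelGram (i l : ℕ) : ℝ :=
  ∫ y in (0 : ℝ)..1, hat h (i * h) y * kappa0 (l * h) y

noncomputable def hatGram (i l : ℕ) : ℝ :=
  ∫ y in (0 : ℝ)..1, hat h (i * h) y * hat h (l * h) y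

variable {h}

theorem secondDiff_kernelGram (hh : 0 ≤ h) (i l : ℕ) :
    secondDiff (fun k => kernelGram h k l) i = -hatKernelGram h (i + 1) l := by
  unfold kernelGram
  rw [secondDiff_intervalIntegral (fun k y => kappa0 (k * h) y * kappa0 (l * h) y)
      fun k => ((continuous_kappa0 _).mul (continuous_kappa0 _)).intervalIntegrable 0 1]
  simp only [secondDiff_mul_const (fun k => kappa0 (k * h) _), secondDiff_kappa0 hh, neg_mul,
    integral_neg, hatKernelGram]

theorem secondDiff_hatKernelGram (hh : 0 ≤ h) (i l : ℕ) :
    secondDiff (fun k => hatKernelGram h i k) l = -hatGram h i (l + 1) := by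
  unfold hatKernelGram
  rw [secondDiff_intervalIntegral (fun k y => hat h (i * h) y * kappa0 (k * h) y)
      fun k => ((continuous_hat _ _).mul (continuous_kappa0 _)).intervalIntegrable 0 1]
  simp only [secondDiff_const_mul _ (fun k => kappa0 (k * h) _), secondDiff_kappa0 hh, mul_neg,
    integral_neg, hatGram]

theorem kernelGram_eq_zero {i : ℕ} (hi : i * h = 0 ∨ i * h = 1) (l : ℕ) :
    kernelGram h i l = 0 := by
  rw [kernelGram, integral_congr (g := 0) fun y hy => by
    rw [Set.uIcc_of_le zero_le_one] at hy
    simp [kappa0_eq_zero hi hy]]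
  simp

theorem hatKernelGram_eq_zero (i : ℕ) {l : ℕ} (hl : l * h = 0 ∨ l * h = 1) :
    hatKernelGram h i l = 0 := by
  rw [hatKernelGram, integral_congr (g := 0) fun y hy => by
    rw [Set.uIcc_of_le zero_le_one] at hy
    simp [kappa0_eq_zero hl hy]]
  simp

theorem hatGram_comm (i l : ℕ) : hatGram h i l = hatGram h l i := by
  simp only [hatGram, mul_comm]

theorem hatGram_self (hh : 0 ≤ h) {i : ℕ} (hi : ((i + 2 : ℕ) : ℝ) * h ≤ 1) :
    hatGram h (i + 1) (i + 1) = 2 * h ^ 3 / 3 :=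
  integral_hat_mul_self hh (by push_cast; nlinarith) (by push_cast at hi ⊢; linarith)

theorem hatGram_succ (hh : 0 ≤ h) {i : ℕ} (hi : ((i + 1 : ℕ) : ℝ) * h ≤ 1) :
    hatGram h i (i + 1) = h ^ 3 / 6 := by
  rw [hatGram, Nat.cast_add_one, add_mul, one_mul]
  exact integral_hat_mul_hat_add hh (by positivity) (by push_cast at hi; linarith)

theorem hatGram_eq_zero_of_add_two_le (hh : 0 ≤ h) {i l : ℕ} (hil : i + 2 ≤ l) :
    hatGram h i l = 0 := by
  have hil' : (i : ℝ) * h + 2 * h ≤ l * h := by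
    have : (i : ℝ) + 2 ≤ l := by exact_mod_cast hil
    nlinarith
  simp [hatGram, hat_mul_hat_eq_zero hil']

end Gram

section GramSums

variable {h : ℝ} {m : ℕ} {w : ℕ → ℝ}

theorem secondDiff_sum_kernelGram_mul (hh : 0 ≤ h) (i : ℕ) :
    secondDiff (fun k => ∑ l ∈ range m, kernelGram h k (l + 1) * w (l + 1)) i =
      -∑ l ∈ range m, hatKernelGram h (i + 1) (l + 1) * w (l + 1) := by
  rw [secondDiff_sum]
  simp only [secondDiff_mul_const (fun k => kernelGram h k _), secondDiff_kernelGram hh, neg_mul,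
    sum_neg_distrib]

theorem sum_hatGram_mul_eq_mul_sum_hatKernelGram (hh : 0 ≤ h) (hmh : (m + 1 : ℝ) * h = 1)
    (hw₀ : w 0 = 0) (hwm : w (m + 1) = 0) {μ : ℝ} (hw : ∀ l < m, secondDiff w l = -μ * w (l + 1))
    (i : ℕ) :
    ∑ l ∈ range m, hatGram h i (l + 1) * w (l + 1) =
      μ * ∑ l ∈ range m, hatKernelGram h i (l + 1) * w (l + 1) := by
  have hparts := sum_mul_secondDiff_comm (hatKernelGram h i) w (m := m)
    (hatKernelGram_eq_zero i (by simp)) (hatKernelGram_eq_zero i (by push_cast; simp [hmh])) hw₀ hwm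
  simp only [secondDiff_hatKernelGram hh, neg_mul, sum_neg_distrib] at hparts
  rw [← neg_neg (∑ l ∈ range m, _), ← hparts, mul_sum, ← sum_neg_distrib]
  refine sum_congr rfl fun l hl => ?_
  rw [hw l (mem_range.mp hl)]
  ring

theorem sum_hatGram_mul_eq_of_lt (hh : 0 ≤ h) (hmh : (m + 1 : ℝ) * h = 1)
    (hw₀ : w 0 = 0) (hwm : w (m + 1) = 0) {i : ℕ} (hi : i < m) :
    ∑ l ∈ range m, hatGram h (i + 1) (l + 1) * w (l + 1) =
      h ^ 3 / 6 * (secondDiff w i + 6 * w (i + 1)) := by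
  have hle : ∀ k ≤ m + 1, (k : ℝ) * h ≤ 1 := fun k hk =>
    hmh ▸ mul_le_mul_of_nonneg_right (by exact_mod_cast hk) hh
  set f : ℕ → ℝ := fun l => hatGram h (i + 1) l * w l
  have hpad : ∑ l ∈ range m, f (l + 1) = ∑ l ∈ range (m + 2), f l := by
    rw [sum_range_succ' f (m + 1), sum_range_succ]
    simp [f, hw₀, hwm]
  have hband : ∑ l ∈ range (m + 2), f l = ∑ l ∈ Ico i (i + 3), f l := by
    refine (sum_subset (fun l hl => ?_) fun l _ hl => ?_).symm
    · simp only [mem_Ico, mem_range] at hl ⊢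
      omega
    · simp only [mem_Ico, not_and_or, not_le, not_lt] at hl
      rcases hl with hl | hl
      · simp only [f]
        rw [hatGram_comm, hatGram_eq_zero_of_add_two_le hh (by omega), zero_mul]
      · simp only [f]
        rw [hatGram_eq_zero_of_add_two_le hh (by omega), zero_mul]
  have hcoeffs : hatGram h (i + 1) i = h ^ 3 / 6 ∧ hatGram h (i + 1) (i + 1) = 2 * h ^ 3 / 3 ∧
      hatGram h (i + 1) (i + 2) = h ^ 3 / 6 :=
    ⟨hatGram_comm (h := h) _ _ ▸ hatGram_succ hh (hle _ (by omega)),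
      hatGram_self hh (hle _ (by omega)), hatGram_succ hh (hle _ (by omega))⟩
  rw [hpad, hband, sum_Ico_eq_sum_range]
  simp only [show i + 3 - i = 3 by omega, sum_range_succ, range_zero, sum_empty, f, add_zero,
    hcoeffs, secondDiff]
  ring_nf

theorem sum_kernelGram_mul_eq_of_secondDiff (hh : 0 ≤ h) (hmh : (m + 1 : ℝ) * h = 1)
    (hw₀ : w 0 = 0) (hwm : w (m + 1) = 0) {μ : ℝ} (hμ : μ ≠ 0)
    (hw : ∀ l < m, secondDiff w l = -μ * w (l + 1)) {i : ℕ} (hi : i ≤ m + 1) :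
    ∑ l ∈ range m, kernelGram h i (l + 1) * w (l + 1) = h ^ 3 * (6 - μ) / (6 * μ ^ 2) * w i := by
  set lam := h ^ 3 * (6 - μ) / (6 * μ ^ 2)
  set v : ℕ → ℝ := fun k => ∑ l ∈ range m, kernelGram h k (l + 1) * w (l + 1)
  refine sub_eq_zero.mp (eq_zero_of_secondDiff_eq_zero (Z := fun k => v k - lam * w k)
    ?_ ?_ (fun k hk => ?_) hi)
  · simp [v, kernelGram_eq_zero (h := h) (i := 0) (by simp), hw₀]
  · simp [v, kernelGram_eq_zero (h := h) (i := m + 1) (by push_cast; simp [hmh]), hwm]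
  · have hR := sum_hatGram_mul_eq_mul_sum_hatKernelGram hh hmh hw₀ hwm hw (k + 1)
    rw [sum_hatGram_mul_eq_of_lt hh hmh hw₀ hwm hk, hw k hk] at hR
    have hsd : secondDiff (fun k => v k - lam * w k) k = secondDiff v k - lam * secondDiff w k := by
      simp only [secondDiff]; ring
    rw [hsd, secondDiff_sum_kernelGram_mul hh k, hw k hk]
    linear_combination (norm := (simp only [lam]; field_simp; ring)) (1 / μ) * hR

end GramSums

theorem sum_kernelGram_mul_sin {m j : ℕ} (hj1 : 1 ≤ j) (hjm : j ≤ m) {i : ℕ} (hi : i ≤ m + 1) :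
    ∑ l ∈ range m, kernelGram (1 / (m + 1)) i (l + 1) * sin ((l + 1 : ℕ) * (j * π / (m + 1))) =
      (1 - 2 / 3 * sin (j * π / (2 * (m + 1))) ^ 2) /
        (16 * (m + 1) ^ 3 * sin (j * π / (2 * (m + 1))) ^ 4) * sin (i * (j * π / (m + 1))) := by
  set θ : ℝ := j * π / (m + 1)
  have hN : (0 : ℝ) < m + 1 := by positivity
  have hhalf : θ / 2 = j * π / (2 * (m + 1)) := by rw [div_div, mul_comm 2]
  have hs : sin (θ / 2) ≠ 0 := by
    refine (sin_pos_of_pos_of_lt_pi (by positivity) ?_).ne'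
    rw [hhalf, div_lt_iff₀ (by positivity)]
    have : (j : ℝ) ≤ m := by exact_mod_cast hjm
    nlinarith [pi_pos]
  have hwm : sin ((m + 1 : ℕ) * θ) = 0 := by
    rw [show ((m + 1 : ℕ) : ℝ) * θ = j * π by push_cast; exact mul_div_cancel₀ _ hN.ne', sin_nat_mul_pi]
  rw [sum_kernelGram_mul_eq_of_secondDiff (w := fun k => sin (k * θ)) (by positivity)
    (by field_simp) (by simp) hwm (by positivity) (fun l _ => secondDiff_sin θ l) hi, ← hhalf]
  field_simp
  ring

theorem stmt_1 (m : ℕ) (j : ℕ) (hj1 : 1 ≤ j) (hjm : j ≤ m)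
    (T : Matrix (Fin m) (Fin m) ℝ)
    (hT : ∀ i l : Fin m, T i l =
      ∫ y in (0:ℝ)..1,
        kappa0 (((i : ℕ) + 1 : ℝ) / ((m : ℝ) + 1)) y *
        kappa0 (((l : ℕ) + 1 : ℝ) / ((m : ℝ) + 1)) y)
    (w : Fin m → ℝ)
    (hw : ∀ l : Fin m, w l = Real.sin ((j : ℝ) * π * ((l : ℕ) + 1 : ℝ) / ((m : ℝ) + 1))) :
    T.mulVec w =
      ((1 - (2 / 3) * Real.sin ((j : ℝ) * π / (2 * ((m : ℝ) + 1))) ^ 2) /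
        (16 * ((m : ℝ) + 1) ^ 3 * Real.sin ((j : ℝ) * π / (2 * ((m : ℝ) + 1))) ^ 4)) • w := by
  have hnode : ∀ k : ℕ, ((k : ℝ) + 1) / (m + 1) = ((k + 1 : ℕ) : ℝ) * (1 / (m + 1)) := fun k => by
    push_cast; ring
  have hangle : ∀ k : ℕ, (j : ℝ) * π * ((k : ℝ) + 1) / (m + 1) =
      ((k + 1 : ℕ) : ℝ) * (j * π / (m + 1)) := fun k => by
    push_cast; ring
  funext i
  simp only [Matrix.mulVec, dotProduct, Pi.smul_apply, smul_eq_mul, hT, hw, hnode, hangle]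
  exact (Fin.sum_univ_eq_sum_range
    (fun l => kernelGram (1 / (m + 1)) (i + 1) (l + 1) * sin ((l + 1 : ℕ) * (j * π / (m + 1)))) m
    ).trans (sum_kernelGram_mul_sin hj1 hjm (by omega))
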